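/- Let H(t,q,p) = ½ Σᵢⱼ gⁱʲ(t,q) pᵢ pⱼ + V(t,q) − c, where for all (t,q) the matrix (gⁱʲ(t,q)) is symmetric positive definite, V is smooth and bounded above by v, and c > v. Then the elementary action ρ(x) = Σⱼ pⱼ ∂H/∂pⱼ(x) − H(x) = ½ Σᵢⱼ gⁱʲ pᵢ pⱼ − V + c is strictly positive at every point of E, and consequently every smooth first integral F of Hamilton's equations for H is a Noether integral: there exists a smooth vector field ζ on all of E with L_ζ α_H = 0 and α_H(x)(ζ(x)) = F(x) for all x ∈ E. -/

import Mathlib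

noncomputable section
open scoped ContDiff

/-- The extended phase space `E = ℝ × ℝⁿ × ℝⁿ`, with points `x = (t, q, p)`. -/
abbrev EE (n : ℕ) : Type := ℝ × (Fin n → ℝ) × (Fin n → ℝ)

/-- The Poincaré–Cartan 1-form `α_H = p dq − H dt`:
`α_H(x)(τ̂, ξ̂, η̂) = ∑ i, pᵢ ξ̂ᵢ − H(x) τ̂`. -/
def pcForm {n : ℕ} (H : EE n → ℝ) (x : EE n) : EE n →L[ℝ] ℝ :=
  (∑ i, x.2.2 i • ((ContinuousLinearMap.proj i).comp
      ((ContinuousLinearMap.fst ℝ (Fin n → ℝ) (Fin n → ℝ)).comp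
        (ContinuousLinearMap.snd ℝ ℝ ((Fin n → ℝ) × (Fin n → ℝ))))))
    - H x • ContinuousLinearMap.fst ℝ ℝ ((Fin n → ℝ) × (Fin n → ℝ))

/-- The vector field `Z_H(x) = (1, ∂H/∂p(x), −∂H/∂q(x))` of Hamilton's equations. -/
def ZH {n : ℕ} (H : EE n → ℝ) (x : EE n) : EE n :=
  (1, fun i => fderiv ℝ H x (0, 0, Pi.single i 1),
      fun i => - fderiv ℝ H x (0, Pi.single i 1, 0))

/-- The Lie derivative of a 1-form `α` along a vector field `ζ`:
`(L_ζ α)(x)(v) = (Dα(x)(ζ(x)))(v) + α(x)(Dζ(x)(v))`. -/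
def lieDeriv {n : ℕ} (ζ : EE n → EE n) (α : EE n → (EE n →L[ℝ] ℝ)) (x : EE n) :
    EE n →L[ℝ] ℝ :=
  fderiv ℝ α x (ζ x) + (α x).comp (fderiv ℝ ζ x)

/-- The exterior derivative of a 1-form:
`dα(x)(u,v) = (Dα(x)u)(v) − (Dα(x)v)(u)`. -/
def extDeriv1 {n : ℕ} (α : EE n → (EE n →L[ℝ] ℝ)) (x u v : EE n) : ℝ :=
  fderiv ℝ α x u v - fderiv ℝ α x v u

/-- The elementary action `ρ(x) = ∑ⱼ pⱼ ∂H/∂pⱼ(x) − H(x)`. -/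
def elemAction {n : ℕ} (H : EE n → ℝ) (x : EE n) : ℝ :=
  (∑ j, x.2.2 j * fderiv ℝ H x (0, 0, Pi.single j 1)) - H x


/-! Take `ζ = a • Z_H + X_F` with `X_F = (0, ∂F/∂p, -∂F/∂q)` and a scalar function `a`.
By Cartan's formula `L_ζ α_H = i_ζ dα_H + d(α_H(ζ))`. The field `Z_H` lies in the kernel of
`dα_H`, and because `F` is a first integral `i_{X_F} dα_H = -dF`; so `i_ζ dα_H = -dF` whatever `a`
is, and `L_ζ α_H = 0` as soon as `α_H(ζ) = a ρ + ∑ pᵢ ∂F/∂pᵢ` equals `F`. Where `ρ` never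
vanishes this fixes a smooth `a`.

For the natural Hamiltonian, `H` is quadratic along the fibres `p ↦ s p`, so Euler's identity
gives `∑ pᵢ ∂H/∂pᵢ = ∑ gⁱʲ pᵢ pⱼ`, whence `ρ = ½ ∑ gⁱʲ pᵢ pⱼ - V + c ≥ c - v > 0`. -/

section
variable {n : ℕ}

def symplecticGradient (F : EE n → ℝ) (x : EE n) : EE n :=
  (0, fun i => fderiv ℝ F x (0, 0, Pi.single i 1), fun i => -fderiv ℝ F x (0, Pi.single i 1, 0))

lemma ZH_eq_add_symplecticGradient (H : EE n → ℝ) (x : EE n) :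
    ZH H x = (1, 0, 0) + symplecticGradient H x := by
  simp [ZH, symplecticGradient]

lemma clm_apply_eq_sum_coords (L : EE n →L[ℝ] ℝ) (v : EE n) :
    L v = v.1 * L (1, 0, 0) + ∑ i, v.2.1 i * L (0, Pi.single i 1, 0)
      + ∑ i, v.2.2 i * L (0, 0, Pi.single i 1) := by
  have hv : v = v.1 • ((1, 0, 0) : EE n) + ∑ i, v.2.1 i • ((0, Pi.single i 1, 0) : EE n)
      + ∑ i, v.2.2 i • ((0, 0, Pi.single i 1) : EE n) := by
    refine Prod.ext ?_ (Prod.ext ?_ ?_)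
    · simp [Prod.fst_sum]
    · funext j
      simp [Prod.fst_sum, Prod.snd_sum, Finset.sum_apply, Pi.single_apply]
    · funext j
      simp [Prod.snd_sum, Finset.sum_apply, Pi.single_apply]
  conv_lhs => rw [hv]
  simp only [map_add, map_sum, map_smul, smul_eq_mul]

lemma pcForm_apply (H : EE n → ℝ) (x u : EE n) :
    pcForm H x u = ∑ i, x.2.2 i * u.2.1 i - H x * u.1 := by
  simp [pcForm]

lemma pcForm_ZH (H : EE n → ℝ) (x : EE n) : pcForm H x (ZH H x) = elemAction H x := by
  simp [pcForm_apply, ZH, elemAction]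

lemma pcForm_symplecticGradient (H F : EE n → ℝ) (x : EE n) :
    pcForm H x (symplecticGradient F x) = ∑ i, x.2.2 i * fderiv ℝ F x (0, 0, Pi.single i 1) := by
  simp [pcForm_apply, symplecticGradient]

lemma contDiff_pcForm {H : EE n → ℝ} (hH : ContDiff ℝ ∞ H) : ContDiff ℝ ∞ (pcForm H) := by
  unfold pcForm; fun_prop

lemma fderiv_pcForm_apply {H : EE n → ℝ} {x : EE n} (hH : DifferentiableAt ℝ H x)
    (u v : EE n) :
    fderiv ℝ (pcForm H) x u v = ∑ i, u.2.2 i * v.2.1 i - fderiv ℝ H x u * v.1 := by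
  have h := (HasFDerivAt.fun_sum (u := Finset.univ) fun i _ =>
    ((ContinuousLinearMap.proj i).comp ((ContinuousLinearMap.snd ℝ (Fin n → ℝ) (Fin n → ℝ)).comp
      (ContinuousLinearMap.snd ℝ ℝ ((Fin n → ℝ) × (Fin n → ℝ))))).hasFDerivAt.smul_const
      ((ContinuousLinearMap.proj i).comp
      ((ContinuousLinearMap.fst ℝ (Fin n → ℝ) (Fin n → ℝ)).comp
        (ContinuousLinearMap.snd ℝ ℝ ((Fin n → ℝ) × (Fin n → ℝ)))))).sub
    (hH.hasFDerivAt.smul_const (ContinuousLinearMap.fst ℝ ℝ ((Fin n → ℝ) × (Fin n → ℝ))))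
  rw [HasFDerivAt.fderiv (f := pcForm H) h]
  simp

lemma extDeriv1_pcForm {H : EE n → ℝ} {x : EE n} (hH : DifferentiableAt ℝ H x) (u v : EE n) :
    extDeriv1 (pcForm H) x u v = ∑ i, (u.2.2 i * v.2.1 i - v.2.2 i * u.2.1 i)
      - (fderiv ℝ H x u * v.1 - fderiv ℝ H x v * u.1) := by
  rw [extDeriv1, fderiv_pcForm_apply hH, fderiv_pcForm_apply hH, Finset.sum_sub_distrib]
  ring

lemma extDeriv1_pcForm_ZH {H : EE n → ℝ} {x : EE n} (hH : DifferentiableAt ℝ H x) (v : EE n) :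
    extDeriv1 (pcForm H) x (ZH H x) v = 0 := by
  rw [extDeriv1_pcForm hH, clm_apply_eq_sum_coords (fderiv ℝ H x) v,
    clm_apply_eq_sum_coords (fderiv ℝ H x) (ZH H x)]
  simp only [ZH, Finset.sum_sub_distrib, neg_mul, Finset.sum_neg_distrib]
  simp only [mul_comm]
  ring

lemma extDeriv1_pcForm_symplecticGradient {H : EE n → ℝ} {x : EE n}
    (hH : DifferentiableAt ℝ H x) (F : EE n → ℝ) (v : EE n) :
    extDeriv1 (pcForm H) x (symplecticGradient F x) v
      = fderiv ℝ F x (ZH H x) * v.1 - fderiv ℝ F x v := by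
  rw [extDeriv1_pcForm hH, clm_apply_eq_sum_coords (fderiv ℝ H x) (symplecticGradient F x),
    clm_apply_eq_sum_coords (fderiv ℝ F x) v, clm_apply_eq_sum_coords (fderiv ℝ F x) (ZH H x)]
  simp only [ZH, symplecticGradient, Finset.sum_sub_distrib, neg_mul, Finset.sum_neg_distrib]
  simp only [mul_comm]
  ring

lemma extDeriv1_smul_add (α : EE n → (EE n →L[ℝ] ℝ)) (x : EE n) (a : ℝ) (u w v : EE n) :
    extDeriv1 α x (a • u + w) v = a * extDeriv1 α x u v + extDeriv1 α x w v := by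
  simp only [extDeriv1, map_add, map_smul, add_apply, smul_apply, smul_eq_mul]
  ring

lemma lieDeriv_apply {ζ : EE n → EE n} {α : EE n → (EE n →L[ℝ] ℝ)} {x : EE n}
    (hα : DifferentiableAt ℝ α x) (hζ : DifferentiableAt ℝ ζ x) (v : EE n) :
    lieDeriv ζ α x v = extDeriv1 α x (ζ x) v + fderiv ℝ (fun y => α y (ζ y)) x v := by
  rw [fderiv_clm_apply hα hζ]
  simp [lieDeriv, extDeriv1]

lemma contDiff_symplecticGradient {F : EE n → ℝ} (hF : ContDiff ℝ ∞ F) :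
    ContDiff ℝ ∞ (symplecticGradient F) := by
  have hdF := hF.fderiv_right (m := ∞) le_rfl
  unfold symplecticGradient
  fun_prop

lemma contDiff_ZH {H : EE n → ℝ} (hH : ContDiff ℝ ∞ H) : ContDiff ℝ ∞ (ZH H) := by
  simp only [funext (ZH_eq_add_symplecticGradient H)]
  exact contDiff_const.add (contDiff_symplecticGradient hH)

lemma contDiff_elemAction {H : EE n → ℝ} (hH : ContDiff ℝ ∞ H) : ContDiff ℝ ∞ (elemAction H) := by
  have hdH := hH.fderiv_right (m := ∞) le_rfl
  unfold elemAction
  fun_prop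

theorem exists_noether_of_elemAction_ne_zero {H F : EE n → ℝ} (hH : ContDiff ℝ ∞ H)
    (hρ : ∀ x, elemAction H x ≠ 0) (hF : ContDiff ℝ ∞ F)
    (hFZ : ∀ x, fderiv ℝ F x (ZH H x) = 0) :
    ∃ ζ : EE n → EE n, ContDiff ℝ ∞ ζ ∧
      (∀ x, lieDeriv ζ (pcForm H) x = 0) ∧ ∀ x, pcForm H x (ζ x) = F x := by
  set a : EE n → ℝ := fun x =>
    (F x - ∑ i, x.2.2 i * fderiv ℝ F x (0, 0, Pi.single i 1)) / elemAction H x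
  have ha : ContDiff ℝ ∞ a := by
    have hdF := hF.fderiv_right (m := ∞) le_rfl
    exact ContDiff.div (by fun_prop) (contDiff_elemAction hH) hρ
  set ζ : EE n → EE n := fun x => a x • ZH H x + symplecticGradient F x
  have hζ : ContDiff ℝ ∞ ζ := (ha.smul (contDiff_ZH hH)).add (contDiff_symplecticGradient hF)
  have hζF : (fun x => pcForm H x (ζ x)) = F := by
    funext x
    simp only [ζ, a, map_add, map_smul, pcForm_ZH, pcForm_symplecticGradient, smul_eq_mul]
    field_simp [hρ x]
    ring
  refine ⟨ζ, hζ, fun x => ?_, fun x => congrFun hζF x⟩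
  have hHx : DifferentiableAt ℝ H x := hH.differentiable (by simp) x
  refine ContinuousLinearMap.ext fun v => ?_
  rw [lieDeriv_apply ((contDiff_pcForm hH).differentiable (by simp) x)
    (hζ.differentiable (by simp) x), hζF, extDeriv1_smul_add, extDeriv1_pcForm_ZH hHx,
    extDeriv1_pcForm_symplecticGradient hHx, hFZ]
  simp

lemma sum_mul_apply_single_eq_apply (L : EE n →L[ℝ] ℝ) (x : EE n) :
    ∑ j, x.2.2 j * L (0, 0, Pi.single j 1) = L (0, 0, x.2.2) := by
  simp [clm_apply_eq_sum_coords L (0, 0, x.2.2)]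

lemma hasDerivAt_comp_fiber_smul {H : EE n → ℝ} {x : EE n} (hH : DifferentiableAt ℝ H x) :
    HasDerivAt (fun s : ℝ => H (x.1, x.2.1, s • x.2.2)) (fderiv ℝ H x (0, 0, x.2.2)) 1 := by
  have hγ : HasDerivAt (fun s : ℝ => ((x.1, x.2.1, s • x.2.2) : EE n)) (0, 0, x.2.2) 1 := by
    have hp := (hasDerivAt_id (1 : ℝ)).smul_const x.2.2
    rw [one_smul] at hp
    exact (hasDerivAt_const _ _).prodMk ((hasDerivAt_const _ _).prodMk hp)
  exact hH.hasFDerivAt.comp_hasDerivAt_of_eq 1 hγ (by simp)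

lemma elemAction_eq_of_fiber_quadratic {H : EE n → ℝ} {x : EE n} (hH : DifferentiableAt ℝ H x)
    (K R : ℝ) (hKR : ∀ s : ℝ, H (x.1, x.2.1, s • x.2.2) = s ^ 2 * K + R) :
    elemAction H x = K - R := by
  have hquad : HasDerivAt (fun s : ℝ => H (x.1, x.2.1, s • x.2.2)) (2 * K) 1 := by
    simp only [hKR]
    simpa using ((hasDerivAt_pow 2 (1 : ℝ)).mul_const K).add_const R
  have hx : H x = K + R := by simpa using hKR 1
  rw [elemAction, sum_mul_apply_single_eq_apply, (hasDerivAt_comp_fiber_smul hH).unique hquad, hx]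
  ring

end

lemma Matrix.PosSemidef.sum_sum_mul_mul_nonneg {n : ℕ} {M : Matrix (Fin n) (Fin n) ℝ}
    (hM : M.PosSemidef) (p : Fin n → ℝ) : 0 ≤ ∑ i, ∑ j, M i j * p i * p j := by
  simpa [dotProduct, Matrix.mulVec, Finset.mul_sum, mul_comm, mul_left_comm, mul_assoc]
    using hM.dotProduct_mulVec_nonneg p

theorem natural_system_inverse_noether_general {n : ℕ}
    (g : ℝ × (Fin n → ℝ) → Matrix (Fin n) (Fin n) ℝ)
    (hg : ∀ i j, ContDiff ℝ ∞ (fun y => g y i j))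
    (hgpos : ∀ y, (g y).PosDef)
    (V : ℝ × (Fin n → ℝ) → ℝ) (hV : ContDiff ℝ ∞ V)
    (v c : ℝ) (hVv : ∀ y, V y ≤ v) (hc : v < c)
    (H : EE n → ℝ)
    (hHdef : ∀ x : EE n, H x =
      (1 / 2) * (∑ i, ∑ j, g (x.1, x.2.1) i j * x.2.2 i * x.2.2 j) + V (x.1, x.2.1) - c) :
    (∀ x : EE n,
      elemAction H x =
        (1 / 2) * (∑ i, ∑ j, g (x.1, x.2.1) i j * x.2.2 i * x.2.2 j) - V (x.1, x.2.1) + c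
      ∧ 0 < elemAction H x) ∧
    (∀ F : EE n → ℝ, ContDiff ℝ ∞ F → (∀ x, fderiv ℝ F x (ZH H x) = 0) →
      ∃ ζ : EE n → EE n, ContDiff ℝ ∞ ζ ∧
        (∀ x, lieDeriv ζ (pcForm H) x = 0) ∧ (∀ x, pcForm H x (ζ x) = F x)) := by
  have hH : ContDiff ℝ ∞ H := by
    rw [funext hHdef]
    fun_prop
  have hρ_eq : ∀ x : EE n, elemAction H x =
      (1 / 2) * (∑ i, ∑ j, g (x.1, x.2.1) i j * x.2.2 i * x.2.2 j) - V (x.1, x.2.1) + c := by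
    intro x
    rw [elemAction_eq_of_fiber_quadratic (hH.differentiable (by simp) x)
      ((1 / 2) * ∑ i, ∑ j, g (x.1, x.2.1) i j * x.2.2 i * x.2.2 j) (V (x.1, x.2.1) - c)]
    · ring
    intro s
    simp only [hHdef, Pi.smul_apply, smul_eq_mul, Finset.mul_sum]
    rw [add_sub_assoc]
    congr 1
    exact Finset.sum_congr rfl fun i _ => Finset.sum_congr rfl fun j _ => by ring
  have hρpos : ∀ x : EE n, 0 < elemAction H x := fun x => by
    have := (hgpos (x.1, x.2.1)).posSemidef.sum_sum_mul_mul_nonneg x.2.2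
    linarith [hρ_eq x, hVv (x.1, x.2.1)]
  exact ⟨fun x => ⟨hρ_eq x, hρpos x⟩,
    fun F hF hFZ => exists_noether_of_elemAction_ne_zero hH (fun x => (hρpos x).ne') hF hFZ⟩

/-- for a natural mechanical Hamiltonian
`H(t,q,p) = ½ ∑ᵢⱼ gⁱʲ(t,q) pᵢ pⱼ + V(t,q) − c` with `g` symmetric positive definite,
`V ≤ v` and `c > v`, the elementary action equals `½ ∑ᵢⱼ gⁱʲ pᵢ pⱼ − V + c` and is
strictly positive everywhere; consequently every smooth first integral `F` of
Hamilton's equations is a Noether integral, i.e. there is a smooth vector field `ζ`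
on all of `E` with `L_ζ α_H = 0` and `α_H(ζ) = F`. -/
theorem natural_system_inverse_noether {n : ℕ} (hn : 1 ≤ n)
    (g : ℝ × (Fin n → ℝ) → Matrix (Fin n) (Fin n) ℝ)
    (hg : ∀ i j, ContDiff ℝ ∞ (fun y => g y i j))
    (hgsym : ∀ y, (g y).IsSymm) (hgpos : ∀ y, (g y).PosDef)
    (V : ℝ × (Fin n → ℝ) → ℝ) (hV : ContDiff ℝ ∞ V)
    (v c : ℝ) (hVv : ∀ y, V y ≤ v) (hc : v < c)
    (H : EE n → ℝ)
    (hHdef : ∀ x : EE n, H x =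
      (1 / 2) * (∑ i, ∑ j, g (x.1, x.2.1) i j * x.2.2 i * x.2.2 j) + V (x.1, x.2.1) - c) :
    (∀ x : EE n,
      elemAction H x =
        (1 / 2) * (∑ i, ∑ j, g (x.1, x.2.1) i j * x.2.2 i * x.2.2 j) - V (x.1, x.2.1) + c
      ∧ 0 < elemAction H x) ∧
    (∀ F : EE n → ℝ, ContDiff ℝ ∞ F → (∀ x, fderiv ℝ F x (ZH H x) = 0) →
      ∃ ζ : EE n → EE n, ContDiff ℝ ∞ ζ ∧
        (∀ x, lieDeriv ζ (pcForm H) x = 0) ∧ (∀ x, pcForm H x (ζ x) = F x)) :=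
  natural_system_inverse_noether_general g hg hgpos V hV v c hVv hc H hHdef
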